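/- arXiv:1201.0559 — 3 statements merged into one kernel-verified Lean document; each statement's English description precedes it below -/
import Mathlib

section
/- Let M be an ergodic Markov chain with stationary distribution π and let M̃ be its time reversal, M̃(x,y) = π(y)M(y,x)/π(x). Then the spectral expansion of M equals the square root of the second largest eigenvalue of the multiplicative reversiblization R = M·M̃, i.e., λ(M) = √(λ(R)). -/
open Finset Matrix

/-- Row-stochastic matrix. -/
def IsStochastic {n : ℕ} (M : Matrix (Fin n) (Fin n) ℝ) : Prop :=
  (∀ i j, 0 ≤ M i j) ∧ ∀ i, ∑ j, M i j = 1

/-- Probability distribution on `Fin n`. -/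
def IsDist {n : ℕ} (x : Fin n → ℝ) : Prop :=
  (∀ i, 0 ≤ x i) ∧ ∑ i, x i = 1

/-- Total variation distance. -/
noncomputable def tvDist {n : ℕ} (u w : Fin n → ℝ) : ℝ :=
  (1 / 2) * ∑ i, |u i - w i|

/-- Inner product under the π-kernel. -/
noncomputable def piInner {n : ℕ} (π u v : Fin n → ℝ) : ℝ :=
  ∑ i, u i * v i / π i

/-- π-norm. -/
noncomputable def piNorm {n : ℕ} (π u : Fin n → ℝ) : ℝ :=
  Real.sqrt (∑ i, (u i) ^ 2 / π i)

/-- Component of `x` parallel to `π` (in the π-inner product). -/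
noncomputable def parComp {n : ℕ} (π x : Fin n → ℝ) : Fin n → ℝ :=
  fun i => piInner π x π * π i

/-- Component of `x` perpendicular to `π` (in the π-inner product). -/
noncomputable def perpComp {n : ℕ} (π x : Fin n → ℝ) : Fin n → ℝ :=
  fun i => x i - parComp π x i

/-- Spectral expansion of a Markov chain with stationary distribution π. -/
noncomputable def specExp {n : ℕ} (π : Fin n → ℝ) (M : Matrix (Fin n) (Fin n) ℝ) : ℝ :=
  sSup {r : ℝ | ∃ x : Fin n → ℝ, x ≠ 0 ∧ piInner π x π = 0 ∧
    r = piNorm π (x ᵥ* M) / piNorm π x}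

/-- Time reversal of a Markov chain with stationary distribution π. -/
noncomputable def timeReversal {n : ℕ} (π : Fin n → ℝ) (M : Matrix (Fin n) (Fin n) ℝ) :
    Matrix (Fin n) (Fin n) ℝ :=
  fun x y => π y * M y x / π x

/-!
Time reversal is the adjoint of `M` for the π-inner product, so `⟨x R, x⟩_π = ‖x M‖_π²`, and
Cauchy–Schwarz gives `‖x M‖_π² ≤ λ(R) ‖x‖_π²` on the orthogonal complement `π^⊥`, i.e.
`λ(M) ≤ √λ(R)`. Conversely, a row-stochastic `M` maps `π^⊥` (the vectors of sum zero) into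
itself, so `λ(M N) ≤ λ(M) λ(N)`; and `M̃`, stochastic by stationarity of `π`, contracts `π^⊥`
by at most `λ(M)` because it is the adjoint of `M`. Hence `λ(R) ≤ λ(M) λ(M̃) ≤ λ(M)²`.
-/

section PiGeometry

variable {n : ℕ} {π : Fin n → ℝ}

lemma piNorm_nonneg (u : Fin n → ℝ) : 0 ≤ piNorm π u := Real.sqrt_nonneg _

lemma piNorm_zero : piNorm π (0 : Fin n → ℝ) = 0 := by simp [piNorm]

lemma piNorm_pos (hπ : ∀ i, 0 < π i) {u : Fin n → ℝ} (hu : u ≠ 0) : 0 < piNorm π u := by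
  obtain ⟨i, hi⟩ := Function.ne_iff.mp hu
  refine Real.sqrt_pos.2 (Finset.sum_pos' (fun j _ => ?_) ⟨i, mem_univ i, ?_⟩)
  · have := hπ j; positivity
  · have := hπ i; simp only [Pi.zero_apply] at hi; positivity

lemma piNorm_sq (hπ : ∀ i, 0 < π i) (u : Fin n → ℝ) : piNorm π u ^ 2 = piInner π u u := by
  rw [piNorm, Real.sq_sqrt (Finset.sum_nonneg fun i _ => by have := hπ i; positivity)]
  simp only [piInner, sq]

lemma piInner_le_piNorm_mul_piNorm (hπ : ∀ i, 0 < π i) (u v : Fin n → ℝ) :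
    piInner π u v ≤ piNorm π u * piNorm π v := by
  have hCS : piInner π u v ^ 2 ≤ (∑ i, u i ^ 2 / π i) * ∑ i, v i ^ 2 / π i :=
    Finset.sum_sq_le_sum_mul_sum_of_sq_le_mul _ (fun i _ => by have := hπ i; positivity)
      (fun i _ => by have := hπ i; positivity)
      fun i _ => le_of_eq (by have := (hπ i).ne'; field_simp)
  calc piInner π u v ≤ |piInner π u v| := le_abs_self _
    _ ≤ _ := Real.abs_le_sqrt hCS
    _ = piNorm π u * piNorm π v :=
      Real.sqrt_mul (Finset.sum_nonneg fun i _ => by have := hπ i; positivity) _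

lemma piInner_pi (hπ : ∀ i, 0 < π i) (x : Fin n → ℝ) : piInner π x π = ∑ i, x i :=
  Finset.sum_congr rfl fun i _ => mul_div_cancel_right₀ _ (hπ i).ne'

-- A crude bound, only used to see that the set whose supremum is `specExp` is bounded above.
lemma piNorm_vecMul_le (hπ : ∀ i, 0 < π i) (N : Matrix (Fin n) (Fin n) ℝ) (x : Fin n → ℝ) :
    piNorm π (x ᵥ* N) ≤ Real.sqrt (∑ j, (∑ i, π i * N i j ^ 2) / π j) * piNorm π x := by
  have hcoord : ∀ j, (∑ i, x i * N i j) ^ 2 ≤ (∑ i, x i ^ 2 / π i) * ∑ i, π i * N i j ^ 2 :=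
    fun j => Finset.sum_sq_le_sum_mul_sum_of_sq_le_mul _ (fun i _ => by have := hπ i; positivity)
      (fun i _ => by have := hπ i; positivity)
      fun i _ => le_of_eq (by have := (hπ i).ne'; field_simp)
  rw [piNorm, piNorm, ← Real.sqrt_mul (Finset.sum_nonneg fun j _ =>
    div_nonneg (Finset.sum_nonneg fun i _ => mul_nonneg (hπ i).le (sq_nonneg _)) (hπ j).le)]
  refine Real.sqrt_le_sqrt ?_
  calc ∑ j, (x ᵥ* N) j ^ 2 / π j
      ≤ ∑ j, (∑ i, x i ^ 2 / π i) * (∑ i, π i * N i j ^ 2) / π j :=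
        Finset.sum_le_sum fun j _ => div_le_div_of_nonneg_right (hcoord j) (hπ j).le
    _ = (∑ j, (∑ i, π i * N i j ^ 2) / π j) * ∑ i, x i ^ 2 / π i := by
        rw [Finset.sum_mul]
        exact Finset.sum_congr rfl fun j _ => by ring

end PiGeometry

section SpectralExpansion

variable {n : ℕ} {π : Fin n → ℝ}

lemma specExp_nonneg (N : Matrix (Fin n) (Fin n) ℝ) : 0 ≤ specExp π N :=
  Real.sSup_nonneg <| by
    rintro r ⟨x, -, -, rfl⟩
    exact div_nonneg (piNorm_nonneg _) (piNorm_nonneg _)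

lemma piNorm_vecMul_le_specExp (hπ : ∀ i, 0 < π i) (N : Matrix (Fin n) (Fin n) ℝ)
    {x : Fin n → ℝ} (hx : piInner π x π = 0) :
    piNorm π (x ᵥ* N) ≤ specExp π N * piNorm π x := by
  rcases eq_or_ne x 0 with rfl | hx0
  · simp [piNorm_zero]
  have hbdd : BddAbove {r : ℝ | ∃ x : Fin n → ℝ, x ≠ 0 ∧ piInner π x π = 0 ∧
      r = piNorm π (x ᵥ* N) / piNorm π x} := by
    refine ⟨Real.sqrt (∑ j, (∑ i, π i * N i j ^ 2) / π j), ?_⟩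
    rintro r ⟨y, -, -, rfl⟩
    exact div_le_of_le_mul₀ (piNorm_nonneg _) (Real.sqrt_nonneg _) (piNorm_vecMul_le hπ N y)
  rw [← div_le_iff₀ (piNorm_pos hπ hx0)]
  exact le_csSup hbdd ⟨x, hx0, hx, rfl⟩

-- `0 ≤ c` is needed since `sSup ∅ = 0`: for `n ≤ 1` there is no nonzero `x ⊥ π`.
lemma specExp_le_bound {N : Matrix (Fin n) (Fin n) ℝ} {c : ℝ} (hc : 0 ≤ c)
    (h : ∀ x, piInner π x π = 0 → piNorm π (x ᵥ* N) ≤ c * piNorm π x) :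
    specExp π N ≤ c :=
  Real.sSup_le (by
    rintro r ⟨x, -, hx, rfl⟩
    exact div_le_of_le_mul₀ (piNorm_nonneg _) hc (h x hx)) hc

lemma piInner_vecMul_pi_eq_zero (hπ : ∀ i, 0 < π i) {N : Matrix (Fin n) (Fin n) ℝ}
    (hN : ∀ i, ∑ j, N i j = 1) {x : Fin n → ℝ} (hx : piInner π x π = 0) :
    piInner π (x ᵥ* N) π = 0 := by
  have hN1 : N *ᵥ 1 = 1 := funext fun i => by simp [mulVec, dotProduct, hN i]
  have hsum : ∑ j, (x ᵥ* N) j = ∑ i, x i := by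
    simpa [dotProduct] using (dotProduct_mulVec x N 1).symm.trans (congrArg (x ⬝ᵥ ·) hN1)
  rwa [piInner_pi hπ, hsum, ← piInner_pi hπ]

lemma specExp_mul_le (hπ : ∀ i, 0 < π i) {M : Matrix (Fin n) (Fin n) ℝ}
    (hM : ∀ i, ∑ j, M i j = 1) (N : Matrix (Fin n) (Fin n) ℝ) :
    specExp π (M * N) ≤ specExp π M * specExp π N := by
  refine specExp_le_bound (mul_nonneg (specExp_nonneg M) (specExp_nonneg N)) fun x hx => ?_
  calc piNorm π (x ᵥ* (M * N)) = piNorm π ((x ᵥ* M) ᵥ* N) := by rw [vecMul_vecMul]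
    _ ≤ specExp π N * piNorm π (x ᵥ* M) :=
        piNorm_vecMul_le_specExp hπ N (piInner_vecMul_pi_eq_zero hπ hM hx)
    _ ≤ specExp π N * (specExp π M * piNorm π x) :=
        mul_le_mul_of_nonneg_left (piNorm_vecMul_le_specExp hπ M hx) (specExp_nonneg N)
    _ = specExp π M * specExp π N * piNorm π x := by ring

end SpectralExpansion

section TimeReversal

variable {n : ℕ} {π : Fin n → ℝ}

lemma piInner_vecMul_timeReversal (hπ : ∀ i, 0 < π i) (M : Matrix (Fin n) (Fin n) ℝ)
    (x v : Fin n → ℝ) :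
    piInner π (x ᵥ* timeReversal π M) v = piInner π x (v ᵥ* M) := by
  simp only [piInner, vecMul, dotProduct, timeReversal, Finset.sum_mul, Finset.mul_sum,
    Finset.sum_div]
  rw [Finset.sum_comm]
  refine Finset.sum_congr rfl fun i _ => Finset.sum_congr rfl fun j _ => ?_
  have := (hπ i).ne'
  have := (hπ j).ne'
  field_simp

lemma timeReversal_row_sum (hπ : ∀ i, 0 < π i) {M : Matrix (Fin n) (Fin n) ℝ}
    (hstat : π ᵥ* M = π) (i : Fin n) : ∑ j, timeReversal π M i j = 1 := by
  have hπM : ∑ j, π j * M j i = π i := congrFun hstat i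
  simp only [timeReversal, ← Finset.sum_div, hπM, div_self (hπ i).ne']

lemma specExp_timeReversal_le (hπ : ∀ i, 0 < π i) {M : Matrix (Fin n) (Fin n) ℝ}
    (hstat : π ᵥ* M = π) : specExp π (timeReversal π M) ≤ specExp π M := by
  refine specExp_le_bound (specExp_nonneg M) fun z hz => ?_
  set w := z ᵥ* timeReversal π M
  have hw : piInner π w π = 0 := piInner_vecMul_pi_eq_zero hπ (timeReversal_row_sum hπ hstat) hz
  rcases (piNorm_nonneg (π := π) w).eq_or_lt with h0 | hpos
  · rw [← h0]; exact mul_nonneg (specExp_nonneg M) (piNorm_nonneg z)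
  refine le_of_mul_le_mul_right ?_ hpos
  calc piNorm π w * piNorm π w = piInner π z (w ᵥ* M) := by
        rw [← sq, piNorm_sq hπ, piInner_vecMul_timeReversal hπ]
    _ ≤ piNorm π z * piNorm π (w ᵥ* M) := piInner_le_piNorm_mul_piNorm hπ _ _
    _ ≤ piNorm π z * (specExp π M * piNorm π w) :=
        mul_le_mul_of_nonneg_left (piNorm_vecMul_le_specExp hπ M hw) (piNorm_nonneg z)
    _ = specExp π M * piNorm π z * piNorm π w := by ring

lemma piNorm_vecMul_sq (hπ : ∀ i, 0 < π i) (M : Matrix (Fin n) (Fin n) ℝ) (x : Fin n → ℝ) :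
    piNorm π (x ᵥ* M) ^ 2 = piInner π (x ᵥ* (M * timeReversal π M)) x := by
  rw [← vecMul_vecMul, piInner_vecMul_timeReversal hπ, piNorm_sq hπ]

lemma specExp_le_sqrt_specExp_mul_timeReversal (hπ : ∀ i, 0 < π i)
    (M : Matrix (Fin n) (Fin n) ℝ) :
    specExp π M ≤ Real.sqrt (specExp π (M * timeReversal π M)) := by
  set b := specExp π (M * timeReversal π M)
  refine specExp_le_bound (Real.sqrt_nonneg b) fun x hx => ?_
  rw [← Real.sqrt_sq (piNorm_nonneg x), ← Real.sqrt_mul (specExp_nonneg _)]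
  refine Real.le_sqrt_of_sq_le ?_
  calc piNorm π (x ᵥ* M) ^ 2 = piInner π (x ᵥ* (M * timeReversal π M)) x :=
        piNorm_vecMul_sq hπ M x
    _ ≤ piNorm π (x ᵥ* (M * timeReversal π M)) * piNorm π x :=
        piInner_le_piNorm_mul_piNorm hπ _ _
    _ ≤ b * piNorm π x * piNorm π x :=
        mul_le_mul_of_nonneg_right (piNorm_vecMul_le_specExp hπ _ hx) (piNorm_nonneg x)
    _ = b * piNorm π x ^ 2 := by ring

lemma sqrt_specExp_mul_timeReversal_le (hπ : ∀ i, 0 < π i) {M : Matrix (Fin n) (Fin n) ℝ}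
    (hM : ∀ i, ∑ j, M i j = 1) (hstat : π ᵥ* M = π) :
    Real.sqrt (specExp π (M * timeReversal π M)) ≤ specExp π M := by
  refine Real.sqrt_le_iff.2 ⟨specExp_nonneg M, ?_⟩
  calc specExp π (M * timeReversal π M)
      ≤ specExp π M * specExp π (timeReversal π M) := specExp_mul_le hπ hM _
    _ ≤ specExp π M * specExp π M :=
        mul_le_mul_of_nonneg_left (specExp_timeReversal_le hπ hstat) (specExp_nonneg M)
    _ = specExp π M ^ 2 := (sq _).symm

end TimeReversal

theorem stmt_4_general (n : ℕ) (M : Matrix (Fin n) (Fin n) ℝ) (π : Fin n → ℝ)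
    (hM : IsStochastic M) (hπpos : ∀ i, 0 < π i)
    (hstat : π ᵥ* M = π) :
    specExp π M = Real.sqrt (specExp π (M * timeReversal π M)) :=
  le_antisymm (specExp_le_sqrt_specExp_mul_timeReversal hπpos M)
    (sqrt_specExp_mul_timeReversal_le hπpos hM.2 hstat)

theorem stmt_4 (n : ℕ) (M : Matrix (Fin n) (Fin n) ℝ) (π : Fin n → ℝ)
    (hM : IsStochastic M) (hπ : IsDist π) (hπpos : ∀ i, 0 < π i)
    (hstat : π ᵥ* M = π) :
    specExp π M = Real.sqrt (specExp π (M * timeReversal π M)) :=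
  stmt_4_general n M π hM hπpos hstat
end

section
/- Let π be a probability distribution with π_i > 0, f:[n]→[0,1] with ∑_i f(i)π_i = μ, and P diagonal with P_{jj} = e^{r f(j)}, where 0 ≤ r ≤ 1/2 (in fact 0 ≤ r ≤ 1 suffices). Then for every vector y with ⟨y,π⟩_π = 0, the parallel component of yP satisfies ‖(yP)^∥‖_π ≤ 2r√μ · ‖y‖_π. -/
open Finset Matrix

/-
The parallel component of `yP` is `⟨yP, π⟩_π π`, whose π-norm is `|⟨yP, π⟩_π|` because `π` is a
probability vector. As `P` is diagonal and `∑ᵢ yᵢ = ⟨y, π⟩_π = 0`, this inner product equals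
`⟨y, π(P - I)⟩_π`, so Cauchy–Schwarz bounds it by `‖y‖_π ‖π(P - I)‖_π`. Finally
`‖π(P - I)‖_π² = ∑ᵢ (e^{r f(i)} - 1)² πᵢ ≤ 4r² ∑ᵢ f(i) πᵢ = 4r²μ`, using `|eˣ - 1| ≤ 2|x|` for
`|x| ≤ 1` and `f(i)² ≤ f(i)`.
-/

lemma sq_mul_div_self {G₀ : Type*} [CommGroupWithZero G₀] (p a : G₀) :
    (p * a) ^ 2 / p = a ^ 2 * p := by
  rw [mul_pow, sq p, mul_div_right_comm, mul_self_div_self, mul_comm]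

section PiInner

variable {n : ℕ} {π : Fin n → ℝ}

lemma abs_piInner_le_piNorm_mul_piNorm (hπ : ∀ i, 0 ≤ π i) (u v : Fin n → ℝ) :
    |piInner π u v| ≤ piNorm π u * piNorm π v := by
  have hCS : piInner π u v ^ 2 ≤ (∑ i, u i ^ 2 / π i) * ∑ i, v i ^ 2 / π i :=
    sum_sq_le_sum_mul_sum_of_sq_le_mul _ (fun i _ => div_nonneg (sq_nonneg _) (hπ i))
      (fun i _ => div_nonneg (sq_nonneg _) (hπ i)) fun i _ => le_of_eq (by ring)
  rw [piNorm, piNorm, ← Real.sqrt_mul (sum_nonneg fun i _ => div_nonneg (sq_nonneg _) (hπ i))]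
  exact Real.abs_le_sqrt hCS

lemma piNorm_parComp (hπ : ∑ i, π i = 1) (x : Fin n → ℝ) :
    piNorm π (parComp π x) = |piInner π x π| := by
  simp only [piNorm, parComp, mul_comm (piInner π x π), sq_mul_div_self, ← mul_sum, hπ, mul_one,
    Real.sqrt_sq_eq_abs]

lemma piInner_self_right (hπ : ∀ i, π i ≠ 0) (x : Fin n → ℝ) : piInner π x π = ∑ i, x i :=
  sum_congr rfl fun i _ => mul_div_cancel_right₀ _ (hπ i)

lemma piNorm_vecMul_diagonal_sub_one (d : Fin n → ℝ) :
    piNorm π (π ᵥ* (diagonal d - 1)) = √(∑ i, (d i - 1) ^ 2 * π i) := by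
  simp only [piNorm, ← diagonal_one, diagonal_sub, vecMul_diagonal, sq_mul_div_self]

lemma piInner_vecMul_diagonal (hπ : ∀ i, π i ≠ 0) {y : Fin n → ℝ} (hy : piInner π y π = 0)
    (d : Fin n → ℝ) :
    piInner π (y ᵥ* diagonal d) π = piInner π y (π ᵥ* (diagonal d - 1)) := by
  rw [piInner_self_right hπ] at hy ⊢
  simp only [piInner, ← diagonal_one, diagonal_sub, vecMul_diagonal]
  calc ∑ i, y i * d i = ∑ i, (y i * d i - y i) := by rw [sum_sub_distrib, hy, sub_zero]
    _ = _ := sum_congr rfl fun i _ => by field_simp [hπ i]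

end PiInner

lemma sq_exp_mul_sub_one_le {r x : ℝ} (hr : |r| ≤ 1) (hx0 : 0 ≤ x) (hx1 : x ≤ 1) :
    (Real.exp (r * x) - 1) ^ 2 ≤ (2 * r) ^ 2 * x := by
  have hrx : |r * x| ≤ 1 := by
    rw [abs_mul, abs_of_nonneg hx0]
    exact mul_le_one₀ hr hx0 hx1
  calc (Real.exp (r * x) - 1) ^ 2 ≤ (2 * |r * x|) ^ 2 :=
        sq_le_sq.mpr ((Real.abs_exp_sub_one_le hrx).trans (le_abs_self _))
    _ = (2 * r) ^ 2 * x * x := by rw [mul_pow, sq_abs]; ring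
    _ ≤ (2 * r) ^ 2 * x := mul_le_of_le_one_right (by positivity) hx1

theorem stmt_9 (n : ℕ) (π : Fin n → ℝ) (hπ : IsDist π) (hπpos : ∀ i, 0 < π i)
    (f : Fin n → ℝ) (hf : ∀ i, 0 ≤ f i ∧ f i ≤ 1)
    (μ : ℝ) (hμ : ∑ i, f i * π i = μ)
    (r : ℝ) (hr0 : 0 ≤ r) (hr : r ≤ 1)
    (P : Matrix (Fin n) (Fin n) ℝ)
    (hP : P = Matrix.diagonal fun j => Real.exp (r * f j))
    (y : Fin n → ℝ) (hy : piInner π y π = 0) :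
    piNorm π (parComp π (y ᵥ* P)) ≤ 2 * r * Real.sqrt μ * piNorm π y := by
  have hμ0 : 0 ≤ μ := hμ ▸ sum_nonneg fun i _ => mul_nonneg (hf i).1 (hπpos i).le
  have hperturb : piNorm π (π ᵥ* (diagonal (fun j => Real.exp (r * f j)) - 1))
      ≤ 2 * r * √μ := by
    rw [piNorm_vecMul_diagonal_sub_one, Real.sqrt_le_iff, mul_pow, Real.sq_sqrt hμ0, ← hμ,
      mul_sum]
    refine ⟨by positivity, sum_le_sum fun i _ => ?_⟩
    rw [← mul_assoc]
    exact mul_le_mul_of_nonneg_right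
      (sq_exp_mul_sub_one_le (abs_le.mpr ⟨by linarith, hr⟩) (hf i).1 (hf i).2) (hπpos i).le
  rw [piNorm_parComp hπ.2, hP, piInner_vecMul_diagonal (fun i => (hπpos i).ne') hy]
  calc _ ≤ piNorm π y * piNorm π (π ᵥ* (diagonal (fun j => Real.exp (r * f j)) - 1)) :=
        abs_piInner_le_piNorm_mul_piNorm (fun i => (hπpos i).le) _ _
    _ ≤ piNorm π y * (2 * r * √μ) := mul_le_mul_of_nonneg_left hperturb (Real.sqrt_nonneg _)
    _ = _ := by ring
end

section
/- Let π be a probability distribution with π_i > 0, f:[n]→[0,1] with ∑_i f(i)π_i = μ, and P diagonal with P_{jj} = e^{−r f(j)} for 0 ≤ r ≤ 1/2. Then ‖(πP)^⊥‖_π ≤ √2 · r √μ. -/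
open Finset Matrix

/-!
The `π`-orthogonal part of `πP` is `(π_i (X_i - S))_i` with `X_i = e^{-r f(i)}` and
`S = ∑ π_i X_i`, so its squared `π`-norm is the `π`-variance of `X`. A variance is at most
the mean squared deviation from any constant, here `1`, and `0 ≤ 1 - e^{-t} ≤ t` gives
`∑ π_i (X_i - 1)² ≤ r² ∑ π_i f(i)² ≤ r² μ`, which is even sharper than the claim.
-/

open Real (exp exp_le_one_iff add_one_le_exp sqrt sqrt_le_sqrt sqrt_mul sqrt_sq one_le_sqrt)

section WeightedVariance

variable {n : ℕ} (π : Fin n → ℝ)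

lemma vecMul_diagonal_eq_mul (X : Fin n → ℝ) : π ᵥ* diagonal X = fun i => π i * X i :=
  funext (vecMul_diagonal π X)

lemma piInner_mul_left_self (X : Fin n → ℝ) :
    piInner π (fun i => π i * X i) π = ∑ i, π i * X i := by
  refine sum_congr rfl fun i _ => ?_
  rw [mul_right_comm, mul_div_right_comm, mul_self_div_self]

lemma perpComp_mul_left (X : Fin n → ℝ) :
    perpComp π (fun i => π i * X i) = fun i => π i * (X i - ∑ j, π j * X j) := by
  funext i
  simp only [perpComp, parComp, piInner_mul_left_self]
  ring

lemma piNorm_mul_left (Y : Fin n → ℝ) :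
    piNorm π (fun i => π i * Y i) = √(∑ i, π i * Y i ^ 2) := by
  refine congrArg sqrt (sum_congr rfl fun i _ => ?_)
  rw [mul_pow, sq, mul_comm, mul_div_assoc, mul_self_div_self, mul_comm]

variable {π}

lemma sum_mul_sub_sq_eq (hπ : ∑ i, π i = 1) (X : Fin n → ℝ) (c : ℝ) :
    ∑ i, π i * (X i - c) ^ 2
      = ∑ i, π i * (X i - ∑ j, π j * X j) ^ 2 + (∑ j, π j * X j - c) ^ 2 := by
  set S := ∑ j, π j * X j
  have expand : ∀ a, ∑ i, π i * (X i - a) ^ 2 = ∑ i, π i * X i ^ 2 - 2 * a * S + a ^ 2 := by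
    intro a
    have pointwise : ∀ i, π i * (X i - a) ^ 2
        = π i * X i ^ 2 - 2 * a * (π i * X i) + a ^ 2 * π i := fun i => by ring
    simp only [pointwise, sum_add_distrib, sum_sub_distrib, ← mul_sum, hπ, mul_one, S]
  rw [expand, expand]
  ring

lemma sum_mul_sub_mean_sq_le (hπ : ∑ i, π i = 1) (X : Fin n → ℝ) (c : ℝ) :
    ∑ i, π i * (X i - ∑ j, π j * X j) ^ 2 ≤ ∑ i, π i * (X i - c) ^ 2 := by
  rw [sum_mul_sub_sq_eq hπ X c]
  exact le_add_of_nonneg_right (sq_nonneg _)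

end WeightedVariance

lemma sq_exp_neg_sub_one_le {t : ℝ} (ht : 0 ≤ t) : (exp (-t) - 1) ^ 2 ≤ t ^ 2 := by
  have upper : exp (-t) ≤ 1 := exp_le_one_iff.mpr (neg_nonpos.mpr ht)
  have lower : 1 - t ≤ exp (-t) := by linarith [add_one_le_exp (-t)]
  rw [← sq_abs, abs_of_nonpos (sub_nonpos.mpr upper)]
  exact pow_le_pow_left₀ (by linarith) (by linarith) 2

theorem stmt_12_general (n : ℕ) (π : Fin n → ℝ) (hπ : IsDist π)
    (f : Fin n → ℝ) (hf : ∀ i, 0 ≤ f i ∧ f i ≤ 1)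
    (μ : ℝ) (hμ : ∑ i, f i * π i = μ)
    (r : ℝ) (hr0 : 0 ≤ r)
    (P : Matrix (Fin n) (Fin n) ℝ)
    (hP : P = Matrix.diagonal fun j => Real.exp (-(r * f j))) :
    piNorm π (perpComp π (π ᵥ* P)) ≤ Real.sqrt 2 * r * Real.sqrt μ := by
  subst hP hμ
  set X : Fin n → ℝ := fun j => exp (-(r * f j))
  have term_le : ∀ i, π i * (X i - 1) ^ 2 ≤ r ^ 2 * (f i * π i) := fun i => by
    obtain ⟨hf0, hf1⟩ := hf i
    calc π i * (X i - 1) ^ 2 ≤ π i * (r * f i) ^ 2 :=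
          mul_le_mul_of_nonneg_left (sq_exp_neg_sub_one_le (mul_nonneg hr0 hf0)) (hπ.1 i)
      _ = r ^ 2 * (f i * f i * π i) := by ring
      _ ≤ r ^ 2 * (f i * π i) := by
          gcongr
          · exact hπ.1 i
          · exact mul_le_of_le_one_left hf0 hf1
  calc piNorm π (perpComp π (π ᵥ* diagonal X))
      = √(∑ i, π i * (X i - ∑ j, π j * X j) ^ 2) := by
        rw [vecMul_diagonal_eq_mul, perpComp_mul_left, piNorm_mul_left]
    _ ≤ √(∑ i, π i * (X i - 1) ^ 2) := sqrt_le_sqrt (sum_mul_sub_mean_sq_le hπ.2 X 1)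
    _ ≤ √(r ^ 2 * ∑ i, f i * π i) :=
        sqrt_le_sqrt (by rw [mul_sum]; exact sum_le_sum fun i _ => term_le i)
    _ = r * √(∑ i, f i * π i) := by rw [sqrt_mul (sq_nonneg r), sqrt_sq hr0]
    _ ≤ √2 * r * √(∑ i, f i * π i) := by
        rw [mul_assoc]
        exact le_mul_of_one_le_left (by positivity) (one_le_sqrt.mpr one_le_two)

theorem stmt_12 (n : ℕ) (π : Fin n → ℝ) (hπ : IsDist π) (hπpos : ∀ i, 0 < π i)
    (f : Fin n → ℝ) (hf : ∀ i, 0 ≤ f i ∧ f i ≤ 1)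
    (μ : ℝ) (hμ : ∑ i, f i * π i = μ)
    (r : ℝ) (hr0 : 0 ≤ r) (hr : r ≤ 1 / 2)
    (P : Matrix (Fin n) (Fin n) ℝ)
    (hP : P = Matrix.diagonal fun j => Real.exp (-(r * f j))) :
    piNorm π (perpComp π (π ᵥ* P)) ≤ Real.sqrt 2 * r * Real.sqrt μ :=
  stmt_12_general n π hπ f hf μ hμ r hr0 P hP
end
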